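/- Let Γ be a finitely generated discrete group acting by homeomorphisms on a compact Hausdorff space X, and suppose the transformation groupoid X⋊Γ has property (T). Then there exists a sequence (a_n), where each a_n is a finitely supported function from Γ to C(X, ℂ), such that for every ε > 0 there is N ∈ ℕ with the following property: for every n ≥ N and every covariant pair (π, u) on any complex Hilbert space H, ‖Σ_{g∈Γ} π(a_n(g)) u_g − P‖ ≤ ε, where P is the orthogonal projection of H onto the closed subspace {ξ ∈ H : u_g ξ = ξ for all g ∈ Γ}. (Specialisation to transformation groupoids of the theorem that a compactly generated groupoid with property (T) admits a Kazhdan projection in its maximal groupoid C*-algebra: since Γ is finitely generated, X⋊Γ is compactly generated, and the Kazhdan projection is a norm limit, uniformly over all representations, of elements of C_c(X⋊Γ).) -/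

import Mathlib

/-!
Property (T) makes `(S, c)` a Kazhdan pair for the unitary part `u` of every covariant pair:
`c ‖ζ‖ ≤ ∑_{g ∈ S} ‖u_g ζ - ζ‖` for `ζ` orthogonal to the invariant vectors, because
`‖π(f)‖ ≤ ‖f‖_∞ ≤ 1`. Let `m = 1 - t ∑_{g ∈ S} (2 - g - g⁻¹) ∈ ℂ[Γ]` with `t = (4(|S| + 1))⁻¹`.
Its image `M = 1 - t ∑ (1 - u_g)⋆(1 - u_g)` is self-adjoint, fixes the invariant vectors and has
`⟨M ζ, ζ⟩ = ‖ζ‖² - t ∑ ‖u_g ζ - ζ‖²`, which on the orthogonal complement lies between `0` and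
`r ‖ζ‖²`, `r = max (1 - c² / (4(|S| + 1)²)) 0 < 1`, by Cauchy–Schwarz. Hence `‖M - P‖ ≤ r`, and
since `MP = PM = P² = P` we get `‖Mⁿ - P‖ = ‖(M - P)ⁿ‖ ≤ rⁿ`. The approximants are the
coefficients of `mⁿ`, viewed as constant functions on `X`; none of this depends on the
representation.
-/

open scoped InnerProductSpace Pointwise


noncomputable section

/-- A covariant pair for the action of a discrete group `Γ` on a compact Hausdorff space
`X`, on a complex Hilbert space `H`: a unital *-homomorphism `π : C(X, ℂ) → B(H)` and a
unitary representation `u` of `Γ` on `H` satisfying the covariance relation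
`u_g π(f) u_g⁻¹ = π(x ↦ f(g⁻¹ · x))`. -/
structure CovariantPair (Γ : Type) [Group Γ] (X : Type) [TopologicalSpace X]
    [CompactSpace X] [T2Space X] [MulAction Γ X] [ContinuousConstSMul Γ X]
    (H : Type) [NormedAddCommGroup H] [InnerProductSpace ℂ H] [CompleteSpace H] where
  π : C(X, ℂ) →⋆ₐ[ℂ] (H →L[ℂ] H)
  u : Γ →* unitary (H →L[ℂ] H)
  covariant : ∀ (g : Γ) (f : C(X, ℂ)),
    (u g : H →L[ℂ] H) * π f * (u g⁻¹ : H →L[ℂ] H) =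
      π (f.comp ⟨fun x => g⁻¹ • x, continuous_const_smul g⁻¹⟩)

/-- Property (T) for the transformation groupoid `X ⋊ Γ`, phrased via covariant pairs:
there are a finite `S ⊆ Γ` and `c > 0` such that for every covariant pair `(π, u)` and
every vector `ξ` orthogonal to the `u`-invariant vectors there is a family
`(f_g)_{g ∈ S}` in `C(X, ℂ)` with I-norm at most one and
`‖Σ_{g ∈ S} π(f_g) u_g ξ − π(Σ_{g ∈ S} f_g) ξ‖ ≥ c ‖ξ‖`. -/
def TransPropT (Γ : Type) [Group Γ] (X : Type) [TopologicalSpace X] [CompactSpace X]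
    [T2Space X] [MulAction Γ X] [ContinuousConstSMul Γ X] : Prop :=
  ∃ (S : Finset Γ) (c : ℝ), 0 < c ∧
    ∀ (H : Type) [NormedAddCommGroup H] [InnerProductSpace ℂ H] [CompleteSpace H]
      (cp : CovariantPair Γ X H) (ξ : H),
      (∀ η : H, (∀ g : Γ, (cp.u g : H →L[ℂ] H) η = η) → (inner ℂ η ξ : ℂ) = 0) →
      ∃ f : Γ → C(X, ℂ),
        (∀ x : X, ∑ g ∈ S, ‖f g x‖ ≤ 1) ∧
        (∀ x : X, ∑ g ∈ S, ‖f g (g • x)‖ ≤ 1) ∧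
        c * ‖ξ‖ ≤ ‖(∑ g ∈ S, cp.π (f g) ((cp.u g : H →L[ℂ] H) ξ)) - cp.π (∑ g ∈ S, f g) ξ‖

/-- A `Γ`-invariant Borel probability measure on `X`. -/
def InvariantProbMeasure (Γ : Type) [Group Γ] (X : Type) [TopologicalSpace X]
    [MeasurableSpace X] [MulAction Γ X] (μ : MeasureTheory.Measure X) : Prop :=
  MeasureTheory.IsProbabilityMeasure μ ∧ ∀ (g : Γ) (A : Set X), MeasurableSet A → μ (g • A) = μ A

open Finset

theorem sub_pow_succ_of_mul_eq {R : Type*} [Ring R] {a p : R} (hap : a * p = p) (hpa : p * a = p)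
    (hp : IsIdempotentElem p) (n : ℕ) : (a - p) ^ (n + 1) = a ^ (n + 1) - p := by
  have hpow (k : ℕ) : a ^ k * p = p := by
    induction k with
    | zero => rw [pow_zero, one_mul]
    | succ k ih => rw [pow_succ', mul_assoc, ih, hap]
  induction n with
  | zero => rw [zero_add, pow_one, pow_one]
  | succ n ih => rw [pow_succ, ih, sub_mul, mul_sub, mul_sub, hpow, hpa, hp.eq, ← pow_succ]; abel

namespace ContinuousLinearMap
variable {H : Type*} [NormedAddCommGroup H] [InnerProductSpace ℂ H] [CompleteSpace H]

theorem IsPositive.norm_le_of_reApplyInnerSelf_le {T : H →L[ℂ] H} (hT : T.IsPositive)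
    {r : ℝ} (hr : 0 ≤ r) (h : ∀ x, T.reApplyInnerSelf x ≤ r * ‖x‖ ^ 2) : ‖T‖ ≤ r := by
  rw [CStarAlgebra.norm_le_iff_le_algebraMap T hr ((nonneg_iff_isPositive T).2 hT), le_def]
  refine ⟨(IsSelfAdjoint.algebraMap _ (IsSelfAdjoint.all r)).isSymmetric.sub hT.isSymmetric,
    fun x => ?_⟩
  have hx : T.reApplyInnerSelf x ≤ r * ‖x‖ ^ 2 := h x
  rw [reApplyInnerSelf_apply] at hx ⊢
  rw [sub_apply, algebraMap_apply, inner_sub_left, map_sub,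
    RCLike.real_smul_eq_coe_smul (K := ℂ), inner_smul_real_left, RCLike.smul_re,
    inner_self_eq_norm_sq]
  exact sub_nonneg.2 hx

variable {M : H →L[ℂ] H} {K : Submodule ℂ H} [K.HasOrthogonalProjection]

theorem reApplyInnerSelf_sub_starProjection (hM : IsSelfAdjoint M) (hMK : ∀ η ∈ K, M η = η)
    (ξ : H) :
    (M - K.starProjection).reApplyInnerSelf ξ = M.reApplyInnerSelf (Kᗮ.starProjection ξ) := by
  set P := K.starProjection
  have hPξ : P ξ ∈ K := K.starProjection_apply_mem ξ
  have hζ : ξ - P ξ ∈ Kᗮ := K.sub_starProjection_mem_orthogonal ξ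
  have hMP : (M - P) ξ = M (ξ - P ξ) := by rw [sub_apply, map_sub, hMK _ hPξ]
  have hcross : ⟪M (ξ - P ξ), P ξ⟫_ℂ = 0 := by
    rw [← adjoint_inner_right, hM.adjoint_eq, hMK _ hPξ]
    exact K.inner_left_of_mem_orthogonal hPξ hζ
  rw [reApplyInnerSelf_apply, reApplyInnerSelf_apply, hMP, K.starProjection_orthogonal_val]
  rw [inner_sub_right, hcross, sub_zero]

theorem norm_sub_starProjection_le (hM : IsSelfAdjoint M) (hMK : ∀ η ∈ K, M η = η)
    {r : ℝ} (hr : 0 ≤ r) (hM0 : ∀ ζ ∈ Kᗮ, 0 ≤ M.reApplyInnerSelf ζ)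
    (hMr : ∀ ζ ∈ Kᗮ, M.reApplyInnerSelf ζ ≤ r * ‖ζ‖ ^ 2) :
    ‖M - K.starProjection‖ ≤ r := by
  have hmem (ξ : H) : Kᗮ.starProjection ξ ∈ Kᗮ := Kᗮ.starProjection_apply_mem ξ
  refine IsPositive.norm_le_of_reApplyInnerSelf_le
    ⟨(hM.sub (isSelfAdjoint_starProjection K)).isSymmetric, fun ξ => ?_⟩ hr fun ξ => ?_
  · rw [reApplyInnerSelf_sub_starProjection hM hMK]
    exact hM0 _ (hmem ξ)
  · rw [reApplyInnerSelf_sub_starProjection hM hMK]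
    calc _ ≤ r * ‖Kᗮ.starProjection ξ‖ ^ 2 := hMr _ (hmem ξ)
      _ ≤ r * ‖ξ‖ ^ 2 := by gcongr; exact Kᗮ.norm_starProjection_apply_le ξ

theorem pow_succ_sub_starProjection (hM : IsSelfAdjoint M) (hMK : ∀ η ∈ K, M η = η) (n : ℕ) :
    M ^ (n + 1) - K.starProjection = (M - K.starProjection) ^ (n + 1) := by
  have hP := isSelfAdjoint_starProjection K
  have hMP : M * K.starProjection = K.starProjection :=
    ext fun ξ => hMK _ (K.starProjection_apply_mem ξ)
  have hPM : K.starProjection * M = K.starProjection := by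
    simpa only [star_mul, hM.star_eq, hP.star_eq] using congrArg star hMP
  exact (sub_pow_succ_of_mul_eq hMP hPM K.isIdempotentElem_starProjection n).symm

end ContinuousLinearMap

section UnitaryRepresentation

variable {Γ : Type*} [Group Γ] {H : Type*} [NormedAddCommGroup H] [InnerProductSpace ℂ H]
  [CompleteSpace H] (u : Γ →* unitary (H →L[ℂ] H))

def invariantSubspace : Submodule ℂ H :=
  ⨅ g, ((u g : H →L[ℂ] H) - 1).ker

variable {u} in
theorem mem_invariantSubspace {η : H} :
    η ∈ invariantSubspace u ↔ ∀ g, (u g : H →L[ℂ] H) η = η := by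
  simp [invariantSubspace, sub_eq_zero]

theorem isClosed_invariantSubspace : IsClosed (invariantSubspace u : Set H) := by
  rw [invariantSubspace, Submodule.coe_iInf]
  exact isClosed_iInter fun g => ((u g : H →L[ℂ] H) - 1).isClosed_ker

instance : (invariantSubspace u).HasOrthogonalProjection :=
  have := (isClosed_invariantSubspace u).completeSpace_coe
  inferInstance

theorem eq_starProjection_invariantSubspace {P : H →L[ℂ] H}
    (hP : ∀ ξ : H, (∀ g : Γ, (u g : H →L[ℂ] H) (P ξ) = P ξ) ∧
      ∀ η : H, (∀ g : Γ, (u g : H →L[ℂ] H) η = η) → ⟪η, ξ - P ξ⟫_ℂ = 0) :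
    P = (invariantSubspace u).starProjection :=
  ContinuousLinearMap.ext fun ξ => (Submodule.eq_starProjection_of_mem_orthogonal
    (mem_invariantSubspace.2 (hP ξ).1) ((Submodule.mem_orthogonal _ _).2
      fun η hη => (hP ξ).2 η (mem_invariantSubspace.1 hη))).symm

def groupAlgebraRep : MonoidAlgebra ℂ Γ →ₐ[ℂ] (H →L[ℂ] H) :=
  MonoidAlgebra.lift ℂ (H →L[ℂ] H) Γ ((unitary (H →L[ℂ] H)).subtype.comp u)

/-- The weight `(4 (|S| + 1))⁻¹` keeps `1 - t ∑ (2 - g - g⁻¹)` positive in every unitary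
representation (each `2 - u_g - u_g⋆` has norm at most `4`), also for `S = ∅`. -/
def lazyRandomWalk (S : Finset Γ) : MonoidAlgebra ℂ Γ :=
  1 - (4 * (#S + 1) : ℝ)⁻¹ •
    ∑ g ∈ S, (2 - MonoidAlgebra.of ℂ Γ g - MonoidAlgebra.of ℂ Γ g⁻¹)

theorem groupAlgebraRep_lazyRandomWalk (S : Finset Γ) :
    groupAlgebraRep u (lazyRandomWalk S) = 1 - (4 * (#S + 1) : ℝ)⁻¹ •
      ∑ g ∈ S, star (1 - (u g : H →L[ℂ] H)) * (1 - (u g : H →L[ℂ] H)) := by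
  simp only [lazyRandomWalk, map_sub, map_one, AlgHom.map_smul_of_tower, map_sum]
  congr 2
  refine sum_congr rfl fun g _ => ?_
  have hstar : ((u g⁻¹ : unitary (H →L[ℂ] H)) : H →L[ℂ] H) = star (u g : H →L[ℂ] H) := by
    rw [map_inv, ← Unitary.star_eq_inv, Unitary.coe_star]
  rw [map_ofNat, groupAlgebraRep, MonoidAlgebra.lift_of, MonoidAlgebra.lift_of]
  simp only [MonoidHom.coe_comp, Function.comp_apply, Submonoid.coe_subtype, hstar]
  rw [star_sub, star_one, sub_mul, mul_sub, mul_sub, Unitary.coe_star_mul_self, one_mul, one_mul,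
    mul_one, ← one_add_one_eq_two]
  abel

theorem reApplyInnerSelf_lazyRandomWalk (S : Finset Γ) (ζ : H) :
    (groupAlgebraRep u (lazyRandomWalk S)).reApplyInnerSelf ζ =
      ‖ζ‖ ^ 2 - (4 * (#S + 1) : ℝ)⁻¹ * ∑ g ∈ S, ‖(u g : H →L[ℂ] H) ζ - ζ‖ ^ 2 := by
  have hterm (A : H →L[ℂ] H) : RCLike.re ⟪(star A * A) ζ, ζ⟫_ℂ = ‖A ζ‖ ^ 2 :=
    (A.apply_norm_sq_eq_inner_adjoint_left ζ).symm
  rw [groupAlgebraRep_lazyRandomWalk, ContinuousLinearMap.reApplyInnerSelf_apply]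
  simp only [sub_apply, smul_apply, _root_.sum_apply, one_apply_eq_self, inner_sub_left, map_sub,
    RCLike.real_smul_eq_coe_smul (K := ℂ), inner_smul_left, RCLike.conj_ofReal, sum_inner,
    RCLike.re_ofReal_mul, map_sum, hterm, inner_self_eq_norm_sq, norm_sub_rev ζ]

theorem isSelfAdjoint_groupAlgebraRep_lazyRandomWalk (S : Finset Γ) :
    IsSelfAdjoint (groupAlgebraRep u (lazyRandomWalk S)) := by
  rw [groupAlgebraRep_lazyRandomWalk]
  exact .sub (.one _) (.smul (.all _) (isSelfAdjoint_sum _ fun g _ => .star_mul_self _))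

variable {u} in
theorem groupAlgebraRep_lazyRandomWalk_apply_of_mem {η : H} (hη : η ∈ invariantSubspace u)
    (S : Finset Γ) : groupAlgebraRep u (lazyRandomWalk S) η = η := by
  have hfix (g : Γ) : (1 - (u g : H →L[ℂ] H)) η = 0 := by
    rw [sub_apply, one_apply_eq_self, mem_invariantSubspace.1 hη g, sub_self]
  simp [groupAlgebraRep_lazyRandomWalk, hfix]

theorem reApplyInnerSelf_lazyRandomWalk_nonneg (S : Finset Γ) (ζ : H) :
    0 ≤ (groupAlgebraRep u (lazyRandomWalk S)).reApplyInnerSelf ζ := by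
  have hdisp : ∑ g ∈ S, ‖(u g : H →L[ℂ] H) ζ - ζ‖ ^ 2 ≤ #S * (4 * ‖ζ‖ ^ 2) := by
    refine (sum_le_card_nsmul _ _ _ fun g _ => ?_).trans_eq (nsmul_eq_mul _ _)
    have := (norm_sub_le ((u g : H →L[ℂ] H) ζ) ζ).trans_eq (by rw [Unitary.norm_map, ← two_mul])
    nlinarith [norm_nonneg ((u g : H →L[ℂ] H) ζ - ζ)]
  rw [reApplyInnerSelf_lazyRandomWalk, sub_nonneg, inv_mul_le_iff₀ (by positivity)]
  nlinarith [sq_nonneg ‖ζ‖]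

theorem reApplyInnerSelf_lazyRandomWalk_le {S : Finset Γ} {c : ℝ} (hc : 0 ≤ c) {ζ : H}
    (hgap : c * ‖ζ‖ ≤ ∑ g ∈ S, ‖(u g : H →L[ℂ] H) ζ - ζ‖) :
    (groupAlgebraRep u (lazyRandomWalk S)).reApplyInnerSelf ζ ≤
      (1 - c ^ 2 / (4 * (#S + 1) ^ 2)) * ‖ζ‖ ^ 2 := by
  have hCS : (c * ‖ζ‖) ^ 2 ≤ (#S + 1) * ∑ g ∈ S, ‖(u g : H →L[ℂ] H) ζ - ζ‖ ^ 2 :=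
    calc (c * ‖ζ‖) ^ 2 ≤ (∑ g ∈ S, ‖(u g : H →L[ℂ] H) ζ - ζ‖) ^ 2 := by gcongr
      _ ≤ #S * ∑ g ∈ S, ‖(u g : H →L[ℂ] H) ζ - ζ‖ ^ 2 := sq_sum_le_card_mul_sum_sq
      _ ≤ _ := by gcongr; linarith
  have hgap_sq : (c * ‖ζ‖) ^ 2 / (#S + 1) ≤ ∑ g ∈ S, ‖(u g : H →L[ℂ] H) ζ - ζ‖ ^ 2 := by
    rw [div_le_iff₀ (by positivity)]
    linarith
  rw [reApplyInnerSelf_lazyRandomWalk]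
  calc _ ≤ ‖ζ‖ ^ 2 - (4 * (#S + 1) : ℝ)⁻¹ * ((c * ‖ζ‖) ^ 2 / (#S + 1)) := by gcongr
    _ = _ := by field_simp

variable {u} in
theorem norm_lazyRandomWalk_pow_sub_starProjection_le {S : Finset Γ} {c : ℝ} (hc : 0 ≤ c)
    (hgap : ∀ ζ ∈ (invariantSubspace u)ᗮ, c * ‖ζ‖ ≤ ∑ g ∈ S, ‖(u g : H →L[ℂ] H) ζ - ζ‖) (n : ℕ) :
    ‖groupAlgebraRep u (lazyRandomWalk S) ^ (n + 1) - (invariantSubspace u).starProjection‖ ≤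
      max (1 - c ^ 2 / (4 * (#S + 1) ^ 2)) 0 ^ (n + 1) := by
  have hM := isSelfAdjoint_groupAlgebraRep_lazyRandomWalk u S
  have hMK (η : H) (hη : η ∈ invariantSubspace u) :=
    groupAlgebraRep_lazyRandomWalk_apply_of_mem hη S
  rw [ContinuousLinearMap.pow_succ_sub_starProjection hM hMK]
  refine (norm_pow_le' _ n.succ_pos).trans (pow_le_pow_left₀ (norm_nonneg _) ?_ _)
  refine ContinuousLinearMap.norm_sub_starProjection_le hM hMK (le_max_right _ _)
    (fun ζ _ => reApplyInnerSelf_lazyRandomWalk_nonneg u S ζ) fun ζ hζ => ?_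
  exact (reApplyInnerSelf_lazyRandomWalk_le u hc (hgap ζ hζ)).trans
    (by gcongr; exact le_max_left _ _)

end UnitaryRepresentation

section CovariantPair

variable {Γ : Type} [Group Γ] {X : Type} [TopologicalSpace X] [CompactSpace X] [T2Space X]
  [MulAction Γ X] [ContinuousConstSMul Γ X]

theorem TransPropT.exists_kazhdan_pair (hT : TransPropT Γ X) :
    ∃ (S : Finset Γ) (c : ℝ), 0 < c ∧
      ∀ (H : Type) [NormedAddCommGroup H] [InnerProductSpace ℂ H] [CompleteSpace H]
        (cp : CovariantPair Γ X H), ∀ ζ ∈ (invariantSubspace cp.u)ᗮ,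
          c * ‖ζ‖ ≤ ∑ g ∈ S, ‖(cp.u g : H →L[ℂ] H) ζ - ζ‖ := by
  obtain ⟨S, c, hc, hT⟩ := hT
  refine ⟨S, c, hc, fun H _ _ _ cp ζ hζ => ?_⟩
  obtain ⟨f, hf, -, hfζ⟩ := hT H cp ζ fun η hη =>
    Submodule.inner_right_of_mem_orthogonal (mem_invariantSubspace.2 hη) hζ
  have hπ {g : Γ} (hg : g ∈ S) (v : H) : ‖cp.π (f g) v‖ ≤ ‖v‖ := by
    have hfg : ‖f g‖ ≤ 1 := (ContinuousMap.norm_le _ zero_le_one).2 fun x =>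
      (single_le_sum (fun g' _ => norm_nonneg (f g' x)) hg).trans (hf x)
    calc ‖cp.π (f g) v‖ ≤ ‖cp.π (f g)‖ * ‖v‖ := (cp.π (f g)).le_opNorm v
      _ ≤ 1 * ‖v‖ := by gcongr; exact (NonUnitalStarAlgHom.norm_apply_le cp.π (f g)).trans hfg
      _ = ‖v‖ := one_mul _
  calc c * ‖ζ‖
      ≤ ‖∑ g ∈ S, cp.π (f g) ((cp.u g : H →L[ℂ] H) ζ) - cp.π (∑ g ∈ S, f g) ζ‖ := hfζ
    _ = ‖∑ g ∈ S, cp.π (f g) ((cp.u g : H →L[ℂ] H) ζ - ζ)‖ := by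
      simp only [map_sum, _root_.sum_apply, map_sub, sum_sub_distrib]
    _ ≤ ∑ g ∈ S, ‖(cp.u g : H →L[ℂ] H) ζ - ζ‖ :=
      (norm_sum_le _ _).trans (sum_le_sum fun g hg => hπ hg _)

theorem CovariantPair.sum_mapRange_algebraMap {H : Type} [NormedAddCommGroup H]
    [InnerProductSpace ℂ H] [CompleteSpace H] (cp : CovariantPair Γ X H)
    (x : MonoidAlgebra ℂ Γ) :
    ∑ g ∈ (x.coeff.mapRange (algebraMap ℂ C(X, ℂ)) (map_zero _)).support,
        cp.π (x.coeff.mapRange (algebraMap ℂ C(X, ℂ)) (map_zero _) g) * (cp.u g : H →L[ℂ] H) =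
      groupAlgebraRep cp.u x := by
  refine (Finsupp.sum_mapRange_index (h := fun g a => cp.π a * (cp.u g : H →L[ℂ] H))
    fun _ => by rw [map_zero, zero_mul]).trans ?_
  simp only [AlgHomClass.commutes, groupAlgebraRep, MonoidAlgebra.lift_apply']
  rfl

end CovariantPair

theorem exists_kazhdan_projection_approximants_general (Γ : Type) [Group Γ]
    (X : Type) [TopologicalSpace X] [CompactSpace X] [T2Space X] [MulAction Γ X]
    [ContinuousConstSMul Γ X] (hT : TransPropT Γ X) :
    ∃ a : ℕ → (Γ →₀ C(X, ℂ)),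
      ∀ ε > (0 : ℝ), ∃ N : ℕ, ∀ n ≥ N,
        ∀ (H : Type) [NormedAddCommGroup H] [InnerProductSpace ℂ H] [CompleteSpace H]
          (cp : CovariantPair Γ X H) (P : H →L[ℂ] H),
          (∀ ξ : H,
            (∀ g : Γ, (cp.u g : H →L[ℂ] H) (P ξ) = P ξ) ∧
            (∀ η : H, (∀ g : Γ, (cp.u g : H →L[ℂ] H) η = η) →
              (inner ℂ η (ξ - P ξ) : ℂ) = 0)) →
          ‖(∑ g ∈ (a n).support, cp.π ((a n) g) * (cp.u g : H →L[ℂ] H)) - P‖ ≤ ε := by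
  obtain ⟨S, c, hc, hgap⟩ := hT.exists_kazhdan_pair
  set r := max (1 - c ^ 2 / (4 * (#S + 1) ^ 2)) 0
  have hr : r < 1 := max_lt (sub_lt_self _ (by positivity)) one_pos
  refine ⟨fun n => ((lazyRandomWalk S) ^ n).coeff.mapRange (algebraMap ℂ C(X, ℂ)) (map_zero _),
    fun ε hε => ?_⟩
  obtain ⟨N, hN⟩ := exists_pow_lt_of_lt_one hε hr
  refine ⟨N + 1, fun n hn H _ _ _ cp P hP => ?_⟩
  obtain ⟨n, rfl⟩ := Nat.exists_eq_add_of_le' (Nat.one_le_of_lt hn)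
  rw [cp.sum_mapRange_algebraMap, map_pow, eq_starProjection_invariantSubspace cp.u hP]
  calc _ ≤ r ^ (n + 1) := norm_lazyRandomWalk_pow_sub_starProjection_le hc.le (hgap H cp) n
    _ ≤ r ^ N := pow_le_pow_of_le_one (le_max_right _ _) hr.le (by omega)
    _ ≤ ε := hN.le

/-- (Existence of Kazhdan projections.)  Let `Γ` be a finitely generated discrete group
acting on a compact Hausdorff space `X`, and suppose the transformation groupoid `X ⋊ Γ`
has property (T).  Then there is a sequence `(a_n)` of finitely supported functions
`Γ → C(X, ℂ)` such that for every `ε > 0` there is `N` with: for every `n ≥ N` and every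
covariant pair `(π, u)` on a Hilbert space `H`,
`‖Σ_g π(a_n(g)) u_g − P‖ ≤ ε`, where `P` is the orthogonal projection onto the
`u`-invariant vectors (characterised by `P ξ` being invariant and `ξ − P ξ` being
orthogonal to every invariant vector). -/
theorem exists_kazhdan_projection_approximants (Γ : Type) [Group Γ] (hfg : Group.FG Γ)
    (X : Type) [TopologicalSpace X] [CompactSpace X] [T2Space X] [MulAction Γ X]
    [ContinuousConstSMul Γ X] (hT : TransPropT Γ X) :
    ∃ a : ℕ → (Γ →₀ C(X, ℂ)),
      ∀ ε > (0 : ℝ), ∃ N : ℕ, ∀ n ≥ N,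
        ∀ (H : Type) [NormedAddCommGroup H] [InnerProductSpace ℂ H] [CompleteSpace H]
          (cp : CovariantPair Γ X H) (P : H →L[ℂ] H),
          (∀ ξ : H,
            (∀ g : Γ, (cp.u g : H →L[ℂ] H) (P ξ) = P ξ) ∧
            (∀ η : H, (∀ g : Γ, (cp.u g : H →L[ℂ] H) η = η) →
              (inner ℂ η (ξ - P ξ) : ℂ) = 0)) →
          ‖(∑ g ∈ (a n).support, cp.π ((a n) g) * (cp.u g : H →L[ℂ] H)) - P‖ ≤ ε :=
  exists_kazhdan_projection_approximants_general Γ X hT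

end
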